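/- Let λ ∈ (0,1), δ_e ∈ (0,1), and A, c > 0, and let (m_k)_{k∈ℕ} be a nonnegative real sequence satisfying m_{k+1} ≤ √λ·m_k + A/(k+1)^{δ_e} + c for all k ∈ ℕ. Let t̄ ∈ ℕ be any integer with |ln √λ| − δ_e/(t̄+1) > 0. Then for all k ∈ ℕ, m_{k+1} ≤ Y₁·(√λ)^{k+1} + Y₂/(k+1)^{δ_e} + Y₃, where Y₁ = m₀ + A·Σ_{t=0}^{t̄−1} (√λ)^{−(t+1)}/(t+1)^{δ_e}, Y₂ = A·(√λ)^{−1}·(|ln √λ| − δ_e/(t̄+1))^{−1}, and Y₃ = c/(1−√λ). -/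

import Mathlib

/-!
Unrolling the recursion gives `m (k+1) ≤ s^(k+1) m 0 + A ∑_{t ≤ k} s^(k-t)/(t+1)^δ + c/(1-s)`
with `s = √λ`. In the sum, the terms with `t < t̄` are `s^(k+1) · s^(-(t+1))/(t+1)^δ`. For
`t ≥ t̄` the growth estimate `(k+1)^δ ≤ (t+1)^δ e^{δ(k-t)/(t̄+1)}` trades the polynomial weight
`(t+1)^(-δ)` for `(k+1)^(-δ)` at the price of replacing `s` by `r = s e^{δ/(t̄+1)} = e^{-ρ} < 1`,
where `ρ = |ln s| - δ/(t̄+1)`; the remaining geometric sum is at most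
`1/(1-r) ≤ 1/(sρ)`, because `1 - e^{-ρ} ≥ ρ e^{-ρ}` and `r ≥ s`.
-/

open Finset Real

theorem le_pow_mul_add_sum_of_le_mul_add {s : ℝ} (hs : 0 ≤ s) {m b : ℕ → ℝ}
    (h : ∀ k, m (k + 1) ≤ s * m k + b k) (k : ℕ) :
    m (k + 1) ≤ s ^ (k + 1) * m 0 + ∑ t ∈ range (k + 1), s ^ (k - t) * b t := by
  induction k with
  | zero => simpa using h 0
  | succ k ih =>
    have hshift : s * ∑ t ∈ range (k + 1), s ^ (k - t) * b t =
        ∑ t ∈ range (k + 1), s ^ (k + 1 - t) * b t := by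
      rw [mul_sum]
      refine sum_congr rfl fun t ht => ?_
      rw [Nat.sub_add_comm (mem_range_succ_iff.mp ht), pow_succ]
      ring
    calc m (k + 1 + 1) ≤ s * m (k + 1) + b (k + 1) := h (k + 1)
      _ ≤ s * (s ^ (k + 1) * m 0 + ∑ t ∈ range (k + 1), s ^ (k - t) * b t) + b (k + 1) := by
        gcongr
      _ = _ := by rw [sum_range_succ _ (k + 1), mul_add, hshift, Nat.sub_self]; ring

theorem sum_range_pow_sub_le {r : ℝ} (h0 : 0 ≤ r) (h1 : r < 1) (k : ℕ) :
    ∑ t ∈ range (k + 1), r ^ (k - t) ≤ (1 - r)⁻¹ := by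
  have hreflect := sum_range_reflect (r ^ ·) (k + 1)
  simp only [add_tsub_cancel_right] at hreflect
  rw [hreflect, range_eq_Ico]
  simpa using geom_sum_Ico_le_of_lt_one h0 h1 (m := 0) (n := k + 1)

theorem mul_exp_neg_le_one_sub_exp_neg (x : ℝ) : x * exp (-x) ≤ 1 - exp (-x) := by
  have h := mul_le_mul_of_nonneg_right (add_one_le_exp x) (exp_pos (-x)).le
  rw [← exp_add, add_neg_cancel, exp_zero] at h
  linarith

theorem add_rpow_le_rpow_mul_exp {x y δ : ℝ} (hx : 0 < x) (hxy : 0 ≤ x + y) (hδ : 0 ≤ δ) :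
    (x + y) ^ δ ≤ x ^ δ * exp (δ * y / x) := by
  have h1 : x + y = x * (1 + y / x) := by field_simp
  have h2 : 0 ≤ 1 + y / x := by rw [h1] at hxy; exact nonneg_of_mul_nonneg_right hxy hx
  rw [h1, mul_rpow hx.le h2, mul_div_assoc, mul_comm δ, exp_mul]
  gcongr
  linarith [add_one_le_exp (y / x)]

theorem pow_sub_eq_rpow_neg_mul_pow {s : ℝ} (hs : 0 < s) {t k : ℕ} (htk : t ≤ k) :
    s ^ (k - t) = s ^ (-((t : ℝ) + 1)) * s ^ (k + 1) := by
  rw [rpow_neg hs.le, ← Nat.add_sub_add_right k 1 t, pow_sub₀ s hs.ne' (by omega), mul_comm]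
  norm_cast

theorem pow_sub_div_rpow_le {s δ : ℝ} (hs : 0 < s) (hδ : 0 ≤ δ) {tbar t k : ℕ}
    (htbar : tbar ≤ t) (htk : t ≤ k) :
    s ^ (k - t) / ((t : ℝ) + 1) ^ δ ≤
      (s * exp (δ / (tbar + 1))) ^ (k - t) / ((k : ℝ) + 1) ^ δ := by
  have hgrowth : ((k : ℝ) + 1) ^ δ ≤ ((t : ℝ) + 1) ^ δ * exp (δ / (tbar + 1)) ^ (k - t) := by
    have hkt : (0 : ℝ) ≤ k - t := by rw [sub_nonneg]; exact_mod_cast htk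
    have h := add_rpow_le_rpow_mul_exp (x := (t : ℝ) + 1) (y := (k : ℝ) - t)
      (by positivity) (by linarith) hδ
    rw [← exp_nat_mul, Nat.cast_sub htk]
    calc ((k : ℝ) + 1) ^ δ = ((t : ℝ) + 1 + ((k : ℝ) - t)) ^ δ := by ring_nf
      _ ≤ (t + 1) ^ δ * exp (δ * (k - t) / (t + 1)) := h
      _ ≤ _ := by
        rw [mul_div_right_comm, mul_comm _ (δ / _)]
        gcongr
  rw [mul_pow, div_le_div_iff₀ (by positivity) (by positivity)]
  calc s ^ (k - t) * ((k : ℝ) + 1) ^ δ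
      ≤ s ^ (k - t) * (((t : ℝ) + 1) ^ δ * exp (δ / (tbar + 1)) ^ (k - t)) := by gcongr
    _ = _ := by ring

theorem sum_pow_sub_div_rpow_le {s δ : ℝ} (hs : 0 < s) (hδ : 0 ≤ δ) {tbar : ℕ}
    (hρ : 0 < -log s - δ / (tbar + 1)) (k : ℕ) :
    ∑ t ∈ range (k + 1), s ^ (k - t) / ((t : ℝ) + 1) ^ δ ≤
      (∑ t ∈ range tbar, s ^ (-((t : ℝ) + 1)) / ((t : ℝ) + 1) ^ δ) * s ^ (k + 1) +
        (s⁻¹ * (-log s - δ / (tbar + 1))⁻¹) / ((k : ℝ) + 1) ^ δ := by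
  set ρ := -log s - δ / (tbar + 1)
  set r := s * exp (δ / (tbar + 1))
  have hr : r = exp (-ρ) := by rw [neg_sub, sub_neg_eq_add, exp_add, exp_log hs, mul_comm]
  have hr1 : r < 1 := by rw [hr, exp_lt_one_iff]; linarith
  have hsr : s ≤ r := le_mul_of_one_le_right hs.le (one_le_exp (by positivity))
  have hpointwise : ∀ t ∈ range (k + 1), s ^ (k - t) / ((t : ℝ) + 1) ^ δ ≤
      (if t ∈ range tbar then s ^ (-((t : ℝ) + 1)) / ((t : ℝ) + 1) ^ δ * s ^ (k + 1) else 0) +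
        r ^ (k - t) / ((k : ℝ) + 1) ^ δ := by
    intro t ht
    have htk := mem_range_succ_iff.mp ht
    split_ifs with htbar
    · rw [pow_sub_eq_rpow_neg_mul_pow hs htk, div_mul_eq_mul_div, mul_comm (s ^ _ : ℝ)]
      exact le_add_of_nonneg_right (by positivity)
    · rw [zero_add]
      exact pow_sub_div_rpow_le hs hδ (by simpa using htbar) htk
  have hinv : (1 - r)⁻¹ ≤ s⁻¹ * ρ⁻¹ := by
    rw [← mul_inv]
    refine inv_anti₀ (by positivity) ?_
    calc s * ρ ≤ ρ * r := by rw [mul_comm]; gcongr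
      _ ≤ 1 - r := hr ▸ mul_exp_neg_le_one_sub_exp_neg ρ
  calc ∑ t ∈ range (k + 1), s ^ (k - t) / ((t : ℝ) + 1) ^ δ
      ≤ ∑ t ∈ range (k + 1) ∩ range tbar, s ^ (-((t : ℝ) + 1)) / ((t : ℝ) + 1) ^ δ * s ^ (k + 1) +
          (∑ t ∈ range (k + 1), r ^ (k - t)) / ((k : ℝ) + 1) ^ δ := by
        rw [← sum_ite_mem, sum_div, ← sum_add_distrib]
        exact sum_le_sum hpointwise
    _ ≤ (∑ t ∈ range tbar, s ^ (-((t : ℝ) + 1)) / ((t : ℝ) + 1) ^ δ) * s ^ (k + 1) +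
          (s⁻¹ * ρ⁻¹) / ((k : ℝ) + 1) ^ δ := by
        rw [← sum_mul]
        gcongr ?_ * _ + ?_ / _
        · exact sum_le_sum_of_subset_of_nonneg inter_subset_right fun t _ _ => by positivity
        · exact (sum_range_pow_sub_le (by positivity) hr1 k).trans hinv

theorem stmt_1_general
    (lam δe A c : ℝ) (hlam : lam ∈ Set.Ioo (0:ℝ) 1) (hδe : δe ∈ Set.Ioo (0:ℝ) 1)
    (hA : 0 < A) (hc : 0 < c)
    (m : ℕ → ℝ)
    (hrec : ∀ k : ℕ, m (k + 1) ≤ Real.sqrt lam * m k + A / ((k : ℝ) + 1) ^ δe + c)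
    (tbar : ℕ) (htbar : 0 < |Real.log (Real.sqrt lam)| - δe / ((tbar : ℝ) + 1)) :
    ∀ k : ℕ,
      m (k + 1) ≤
        (m 0 + A * ∑ t ∈ Finset.range tbar,
              (Real.sqrt lam) ^ (-((t : ℝ) + 1)) / ((t : ℝ) + 1) ^ δe)
            * (Real.sqrt lam) ^ (k + 1)
          + (A * (Real.sqrt lam)⁻¹
              * (|Real.log (Real.sqrt lam)| - δe / ((tbar : ℝ) + 1))⁻¹) / ((k : ℝ) + 1) ^ δe
          + c / (1 - Real.sqrt lam) := by
  intro k
  set s := √lam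
  have hs0 : 0 < s := sqrt_pos.mpr hlam.1
  have hs1 : s < 1 := (sqrt_lt' one_pos).mpr (by simpa using hlam.2)
  rw [abs_of_neg (log_neg hs0 hs1)] at htbar ⊢
  have hunrolled := le_pow_mul_add_sum_of_le_mul_add hs0.le
    (fun k => (hrec k).trans_eq (add_assoc _ _ _)) k
  have hsplit : ∑ t ∈ range (k + 1), s ^ (k - t) * (A / ((t : ℝ) + 1) ^ δe + c) =
      A * ∑ t ∈ range (k + 1), s ^ (k - t) / ((t : ℝ) + 1) ^ δe +
        c * ∑ t ∈ range (k + 1), s ^ (k - t) := by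
    simp only [mul_sum, ← sum_add_distrib]
    exact sum_congr rfl fun t _ => by ring
  have hdecay := sum_pow_sub_div_rpow_le hs0 hδe.1.le htbar k
  have hconst := sum_range_pow_sub_le hs0.le hs1 k
  rw [hsplit] at hunrolled
  have hbound := add_le_add (mul_le_mul_of_nonneg_left hdecay hA.le)
    (mul_le_mul_of_nonneg_left hconst hc.le)
  refine (hunrolled.trans (add_le_add_right hbound _)).trans_eq ?_
  ring

/-- Deterministic core of Theorem 1 (consensus) of the paper: the expected squared
consensus error `m k` contracts with factor `√λ`, driven by the event-triggering
threshold term `A/(k+1)^δₑ` and a constant term `c`, yielding the consensus bound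
`m (k+1) ≤ Y₁ (√λ)^(k+1) + Y₂/(k+1)^δₑ + Y₃`. -/
theorem stmt_1
    (lam δe A c : ℝ) (hlam : lam ∈ Set.Ioo (0:ℝ) 1) (hδe : δe ∈ Set.Ioo (0:ℝ) 1)
    (hA : 0 < A) (hc : 0 < c)
    (m : ℕ → ℝ) (hm : ∀ k, 0 ≤ m k)
    (hrec : ∀ k : ℕ, m (k + 1) ≤ Real.sqrt lam * m k + A / ((k : ℝ) + 1) ^ δe + c)
    (tbar : ℕ) (htbar : 0 < |Real.log (Real.sqrt lam)| - δe / ((tbar : ℝ) + 1)) :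
    ∀ k : ℕ,
      m (k + 1) ≤
        (m 0 + A * ∑ t ∈ Finset.range tbar,
              (Real.sqrt lam) ^ (-((t : ℝ) + 1)) / ((t : ℝ) + 1) ^ δe)
            * (Real.sqrt lam) ^ (k + 1)
          + (A * (Real.sqrt lam)⁻¹
              * (|Real.log (Real.sqrt lam)| - δe / ((tbar : ℝ) + 1))⁻¹) / ((k : ℝ) + 1) ^ δe
          + c / (1 - Real.sqrt lam) :=
  stmt_1_general lam δe A c hlam hδe hA hc m hrec tbar htbar
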